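/- Let C be a normed *-algebra, A, B ⊆ C *-subalgebras, and X ⊆ C a subspace with AX ⊆ X, XA ⊆ X, X*X ⊆ A, XX* ⊆ A. If B·A = A·B and B·X = X·B (closed-span products), then B·A[X] = A[X]·B, where A[X] is the closed *-subalgebra generated by A ∪ X. -/

import Mathlib

variable {C : Type*} [NonUnitalNormedRing C] [StarRing C] [NormedSpace ℂ C]
  [IsScalarTower ℂ C C] [SMulCommClass ℂ C C] [StarModule ℂ C] [NormedStarGroup C]

/-- `mulSpan X Y` is the closed linear span of the elementwise products `{x * y}`. -/
def mulSpan (X Y : Set C) : Set C :=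
  closure (Submodule.span ℂ {z : C | ∃ x ∈ X, ∃ y ∈ Y, z = x * y} : Set C)

/-- `addCl X Y` is the closure of the set of elementwise sums. -/
def addCl (X Y : Set C) : Set C :=
  closure {z : C | ∃ x ∈ X, ∃ y ∈ Y, z = x + y}

/-- `sumCl X` is the closure of the set of finite sums from the family `X`. -/
def sumCl {ι : Type*} (X : ι → Set C) : Set C :=
  closure {z : C | ∃ (s : Finset ι) (f : ι → C), (∀ i ∈ s, f i ∈ X i) ∧ z = ∑ i ∈ s, f i}

/-- `npowSet X n` is the `(n+1)`-fold closed-span product `X · X ⋯ X`. -/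
def npowSet (X : Set C) : ℕ → Set C
  | 0 => X
  | n + 1 => mulSpan (npowSet X n) X

/-- Integer powers: `X^k` for `k ≥ 1`, `X^0 = A`, `X^k = (X*)^(-k)` for `k ≤ -1`. -/
def zpowSet (A X : Set C) (k : ℤ) : Set C :=
  if k = 0 then A
  else if 0 < k then npowSet X (k.toNat - 1)
  else npowSet ((star ·) '' X) ((-k).toNat - 1)

/-! For `*`-subalgebras `E` and `B`, the elements `y` with `b * y ∈ [E·B]` and `y * b ∈ [B·E]`
for every `b ∈ B` form a closed `*`-subalgebra: products are absorbed because `E` is closed under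
multiplication and closed-span products are associative, and adjoints because `(y b*)* = b y*`
and `B` is self-adjoint. With `E = A[X]` this subalgebra contains `A` and `X` by hypothesis,
hence `E` and its closure, which gives `[B·Ē] ⊆ [E·B] ⊆ [Ē·B]` and symmetrically. -/

section MulSpan

variable {C : Type*} [NonUnitalNormedRing C] [NormedSpace ℂ C] {X Y X' Y' : Set C}

def mulSpanSubmodule (X Y : Set C) : Submodule ℂ C :=
  (Submodule.span ℂ {z : C | ∃ x ∈ X, ∃ y ∈ Y, z = x * y}).topologicalClosure

theorem coe_mulSpanSubmodule (X Y : Set C) : (mulSpanSubmodule X Y : Set C) = mulSpan X Y :=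
  Submodule.topologicalClosure_coe _

theorem isClosed_mulSpan (X Y : Set C) : IsClosed (mulSpan X Y) :=
  isClosed_closure

theorem mul_mem_mulSpan {x y : C} (hx : x ∈ X) (hy : y ∈ Y) : x * y ∈ mulSpan X Y :=
  subset_closure (Submodule.subset_span ⟨x, hx, y, hy, rfl⟩)

theorem mulSpan_subset_preimage {σ : ℂ →+* ℂ} (L : C →SL[σ] C)
    (h : ∀ x ∈ X, ∀ y ∈ Y, L (x * y) ∈ mulSpan X' Y') : mulSpan X Y ⊆ L ⁻¹' mulSpan X' Y' := by
  let M := (mulSpanSubmodule X' Y').comap (L : C →ₛₗ[σ] C)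
  have hM : (M : Set C) = L ⁻¹' mulSpan X' Y' := by
    rw [Submodule.comap_coe, ContinuousLinearMap.coe_coe, coe_mulSpanSubmodule]
  rw [← coe_mulSpanSubmodule, ← hM]
  refine Submodule.topologicalClosure_minimal _ (Submodule.span_le.2 ?_) (hM ▸ ?_)
  · rintro _ ⟨x, hx, y, hy, rfl⟩
    exact hM ▸ h x hx y hy
  · exact (isClosed_mulSpan X' Y').preimage L.continuous

theorem mulSpan_subset_mulSpan (h : ∀ x ∈ X, ∀ y ∈ Y, x * y ∈ mulSpan X' Y') :
    mulSpan X Y ⊆ mulSpan X' Y' :=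
  mulSpan_subset_preimage (ContinuousLinearMap.id ℂ C) h

theorem mulSpan_mono (hX : X ⊆ X') (hY : Y ⊆ Y') : mulSpan X Y ⊆ mulSpan X' Y' :=
  mulSpan_subset_mulSpan fun _ hx _ hy => mul_mem_mulSpan (hX hx) (hY hy)

theorem star_mem_mulSpan [StarRing C] [StarModule ℂ C] [ContinuousStar C]
    (hX : ∀ x ∈ X, star x ∈ X') (hY : ∀ y ∈ Y, star y ∈ Y') {m : C} (hm : m ∈ mulSpan X Y) :
    star m ∈ mulSpan Y' X' :=
  mulSpan_subset_preimage (starL ℂ : C ≃L⋆[ℂ] C).toContinuousLinearMap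
    (fun x hx y hy => by simpa using mul_mem_mulSpan (hY y hy) (hX x hx)) hm

variable [IsScalarTower ℂ C C] [SMulCommClass ℂ C C] {a m : C}

theorem mul_mem_mulSpan_of_mul_mem_left (ha : ∀ x ∈ X, a * x ∈ X) (hm : m ∈ mulSpan X Y) :
    a * m ∈ mulSpan X Y :=
  mulSpan_subset_preimage (ContinuousLinearMap.mul ℂ C a)
    (fun x hx y hy => by simpa [mul_assoc] using mul_mem_mulSpan (ha x hx) hy) hm

theorem mul_mem_mulSpan_of_mul_mem_right (ha : ∀ y ∈ Y, y * a ∈ Y) (hm : m ∈ mulSpan X Y) :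
    m * a ∈ mulSpan X Y :=
  mulSpan_subset_preimage ((ContinuousLinearMap.mul ℂ C).flip a)
    (fun x hx y hy => by simpa [mul_assoc] using mul_mem_mulSpan hx (ha y hy)) hm

theorem mul_mem_mulSpan_of_mul_mem_mulSpan_left (hY : ∀ y ∈ Y, ∀ y' ∈ Y, y * y' ∈ Y)
    (ha : ∀ x ∈ X, a * x ∈ mulSpan X Y) (hm : m ∈ mulSpan X Y) : a * m ∈ mulSpan X Y :=
  mulSpan_subset_preimage (ContinuousLinearMap.mul ℂ C a) (fun x hx y hy => by
    simpa [← mul_assoc] using mul_mem_mulSpan_of_mul_mem_right (hY · · y hy) (ha x hx)) hm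

theorem mul_mem_mulSpan_of_mul_mem_mulSpan_right (hX : ∀ x ∈ X, ∀ x' ∈ X, x * x' ∈ X)
    (ha : ∀ y ∈ Y, y * a ∈ mulSpan X Y) (hm : m ∈ mulSpan X Y) : m * a ∈ mulSpan X Y :=
  mulSpan_subset_preimage ((ContinuousLinearMap.mul ℂ C).flip a) (fun x hx y hy => by
    simpa [mul_assoc] using mul_mem_mulSpan_of_mul_mem_left (hX x hx) (ha y hy)) hm

end MulSpan

section Commutant

variable (E B : NonUnitalStarSubalgebra ℂ C)

def mulSpanCommutant : NonUnitalStarSubalgebra ℂ C where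
  carrier := {y | ∀ b ∈ B, b * y ∈ mulSpan E B ∧ y * b ∈ mulSpan B E}
  add_mem' {x y} hx hy b hb := by
    simp only [← coe_mulSpanSubmodule, SetLike.mem_coe, mul_add, add_mul] at *
    exact ⟨add_mem (hx b hb).1 (hy b hb).1, add_mem (hx b hb).2 (hy b hb).2⟩
  zero_mem' b _ := by
    simp only [← coe_mulSpanSubmodule, SetLike.mem_coe, mul_zero, zero_mul, zero_mem, and_self]
  smul_mem' c y hy b hb := by
    simp only [← coe_mulSpanSubmodule, SetLike.mem_coe, mul_smul_comm, smul_mul_assoc] at *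
    exact ⟨Submodule.smul_mem _ c (hy b hb).1, Submodule.smul_mem _ c (hy b hb).2⟩
  mul_mem' {x y} hx hy b hb := by
    constructor
    · rw [← mul_assoc]
      exact mul_mem_mulSpan_of_mul_mem_mulSpan_right (fun _ h _ h' => mul_mem h h')
        (fun b' hb' => (hy b' hb').1) (hx b hb).1
    · rw [mul_assoc]
      exact mul_mem_mulSpan_of_mul_mem_mulSpan_left (fun _ h _ h' => mul_mem h h')
        (fun b' hb' => (hx b' hb').2) (hy b hb).2
  star_mem' {y} hy b hb := by
    obtain ⟨hby, hyb⟩ := hy (star b) (star_mem hb)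
    have hE : ∀ x ∈ (E : Set C), star x ∈ (E : Set C) := fun _ => star_mem
    have hB : ∀ x ∈ (B : Set C), star x ∈ (B : Set C) := fun _ => star_mem
    constructor
    · simpa only [star_mul, star_star] using star_mem_mulSpan hB hE hyb
    · simpa only [star_mul, star_star] using star_mem_mulSpan hE hB hby

theorem mem_mulSpanCommutant {y : C} :
    y ∈ mulSpanCommutant E B ↔ ∀ b ∈ B, b * y ∈ mulSpan E B ∧ y * b ∈ mulSpan B E :=
  Iff.rfl

theorem isClosed_mulSpanCommutant : IsClosed (mulSpanCommutant E B : Set C) := by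
  have h : (mulSpanCommutant E B : Set C) =
      ⋂ b ∈ B, (b * ·) ⁻¹' mulSpan E B ∩ (· * b) ⁻¹' mulSpan B E := by
    ext y
    simp [mem_mulSpanCommutant]
  rw [h]
  exact isClosed_biInter fun b _ =>
    ((isClosed_mulSpan _ _).preimage (continuous_const_mul b)).inter
      ((isClosed_mulSpan _ _).preimage (continuous_mul_const b))

variable {E B}

theorem subset_mulSpanCommutant {S : Set C} (hSE : S ⊆ E) (hS : mulSpan B S = mulSpan S B) :
    S ⊆ mulSpanCommutant E B := fun _ hy _ hb =>
  ⟨mulSpan_mono hSE subset_rfl (hS ▸ mul_mem_mulSpan hb hy),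
    mulSpan_mono subset_rfl hSE (hS ▸ mul_mem_mulSpan hy hb)⟩

theorem mulSpan_comm_of_subset_mulSpanCommutant {F : Set C} (hEF : (E : Set C) ⊆ F)
    (hF : F ⊆ mulSpanCommutant E B) : mulSpan B F = mulSpan F B :=
  subset_antisymm
    (mulSpan_subset_mulSpan fun _ hb _ hy => mulSpan_mono hEF subset_rfl (hF hy _ hb).1)
    (mulSpan_subset_mulSpan fun _ hy _ hb => mulSpan_mono subset_rfl hEF (hF hy _ hb).2)

end Commutant

theorem mulSpan_generated_comm_general (A : NonUnitalStarSubalgebra ℂ C) (X : Submodule ℂ C)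
    (B : NonUnitalStarSubalgebra ℂ C)
    (hBA : mulSpan (B : Set C) (A : Set C) = mulSpan (A : Set C) (B : Set C))
    (hBX : mulSpan (B : Set C) (X : Set C) = mulSpan (X : Set C) (B : Set C)) :
    mulSpan (B : Set C)
        (closure ((NonUnitalStarAlgebra.adjoin ℂ ((A : Set C) ∪ (X : Set C)) :
          NonUnitalStarSubalgebra ℂ C) : Set C))
      = mulSpan
        (closure ((NonUnitalStarAlgebra.adjoin ℂ ((A : Set C) ∪ (X : Set C)) :
          NonUnitalStarSubalgebra ℂ C) : Set C)) (B : Set C) := by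
  set E := NonUnitalStarAlgebra.adjoin ℂ ((A : Set C) ∪ (X : Set C))
  have hAE : (A : Set C) ⊆ E :=
    Set.subset_union_left.trans (NonUnitalStarAlgebra.subset_adjoin ℂ _)
  have hXE : (X : Set C) ⊆ E :=
    Set.subset_union_right.trans (NonUnitalStarAlgebra.subset_adjoin ℂ _)
  have hE : E ≤ mulSpanCommutant E B := NonUnitalStarAlgebra.adjoin_le <|
    Set.union_subset (subset_mulSpanCommutant hAE hBA) (subset_mulSpanCommutant hXE hBX)
  exact mulSpan_comm_of_subset_mulSpanCommutant subset_closure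
    (closure_minimal hE (isClosed_mulSpanCommutant E B))

/-- If `B` commutes with `A` and with `X` then `B` commutes with `A[X]`. -/
theorem mulSpan_generated_comm (A : NonUnitalStarSubalgebra ℂ C) (X : Submodule ℂ C)
    (hAX : ∀ a ∈ A, ∀ x ∈ X, a * x ∈ X) (hXA : ∀ x ∈ X, ∀ a ∈ A, x * a ∈ X)
    (hXsX : ∀ x ∈ X, ∀ y ∈ X, star x * y ∈ A) (hXXs : ∀ x ∈ X, ∀ y ∈ X, x * star y ∈ A) (B : NonUnitalStarSubalgebra ℂ C)
    (hBA : mulSpan (B : Set C) (A : Set C) = mulSpan (A : Set C) (B : Set C))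
    (hBX : mulSpan (B : Set C) (X : Set C) = mulSpan (X : Set C) (B : Set C)) :
    mulSpan (B : Set C)
        (closure ((NonUnitalStarAlgebra.adjoin ℂ ((A : Set C) ∪ (X : Set C)) :
          NonUnitalStarSubalgebra ℂ C) : Set C))
      = mulSpan
        (closure ((NonUnitalStarAlgebra.adjoin ℂ ((A : Set C) ∪ (X : Set C)) :
          NonUnitalStarSubalgebra ℂ C) : Set C)) (B : Set C) :=
  mulSpan_generated_comm_general A X B hBA hBX
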